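/- Let K be a complete algebraic lattice and let L be a nonempty subset of K closed under nonempty suprema and infima computed in K, regarded as a complete lattice with the induced order. Then the cardinality of the set of compact elements of L is at most the cardinality of the set of compact elements of K. -/

import Mathlib

namespace CompleteLattice

/-- An element `k` is compact if any set with supremum above `k` has a finite subset with
supremum above `k` (the definition of the older Mathlib, restored here). -/
def IsCompactElement {α : Type*} [CompleteLattice α] (k : α) :=
  ∀ s : Set α, k ≤ sSup s → ∃ t : Finset α, ↑t ⊆ s ∧ k ≤ t.sup id

end CompleteLattice

/-!
Embed the complete lattice `M` in the algebraic lattice `K` by `e`, preserving nonempty infima.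
The hull `sInf {m | k ≤ e m}` of `k : K` then satisfies `k ≤ e (hull k) ≤ e m` whenever
`k ≤ e m`. A compact `a` of `M` lies below the join of the hulls of the compact elements of `K`
below `e a`, hence below finitely many of them, so `a` is the hull of their join, which is compact.
Thus the compact elements of `M` are among the hulls of those of `K`.
-/

namespace OrderEmbedding

variable {M K : Type*} [CompleteLattice M] [CompleteLattice K]

theorem map_sInf_of_mem_range (e : M ↪o K) {S : Set M} (h : sInf (e '' S) ∈ Set.range e) :
    e (sInf S) = sInf (e '' S) := by
  obtain ⟨m, hm⟩ := h
  refine le_antisymm (le_sInf ?_) ?_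
  · rintro _ ⟨s, hs, rfl⟩
    exact e.monotone (sInf_le hs)
  · rw [← hm, e.le_iff_le]
    refine le_sInf fun s hs => ?_
    rw [← e.le_iff_le, hm]
    exact sInf_le (Set.mem_image_of_mem e hs)

def hull (e : M ↪o K) (k : K) : M :=
  sInf {m | k ≤ e m}

theorem hull_le (e : M ↪o K) {k : K} {m : M} (h : k ≤ e m) : e.hull k ≤ m :=
  sInf_le h

theorem hull_mono (e : M ↪o K) : Monotone e.hull :=
  fun _ _ hk => sInf_le_sInf fun _ hm => hk.trans hm

theorem le_map_hull (e : M ↪o K) (he : ∀ S : Set M, S.Nonempty → e (sInf S) = sInf (e '' S))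
    {k : K} {m : M} (h : k ≤ e m) : k ≤ e (e.hull k) := by
  rw [hull, he _ ⟨m, h⟩]
  exact le_sInf (Set.forall_mem_image.mpr fun _ hm => hm)

end OrderEmbedding

namespace CompleteLattice

theorem IsCompactElement.finsetSup {α β : Type*} [CompleteLattice α] {f : β → α} (s : Finset β)
    (h : ∀ x ∈ s, IsCompactElement (f x)) : IsCompactElement (s.sup f) := by
  simp only [IsCompactElement, ← isCompactElement_iff_exists_le_sSup_of_le_sSup] at h ⊢
  exact isCompactElement_finsetSup s h

theorem exists_isCompactElement_hull_eq {M K : Type*} [CompleteLattice M] [CompleteLattice K]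
    (halgK : ∀ x : K, sSup {c : K | IsCompactElement c ∧ c ≤ x} = x)
    (e : M ↪o K) (he : ∀ S : Set M, S.Nonempty → e (sInf S) = sInf (e '' S))
    {a : M} (ha : IsCompactElement a) : ∃ c : K, IsCompactElement c ∧ e.hull c = a := by
  classical
  set A := {c : K | IsCompactElement c ∧ c ≤ e a}
  have hle_sSup : a ≤ sSup (e.hull '' A) := by
    rw [← e.le_iff_le, ← halgK (e a)]
    refine sSup_le fun c hc => (e.le_map_hull he hc.2).trans (e.monotone ?_)
    exact le_sSup (Set.mem_image_of_mem _ hc)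
  obtain ⟨t, htA, hat⟩ := ha _ hle_sSup
  obtain ⟨s, hsA, rfl⟩ := Finset.subset_set_image_iff.mp htA
  refine ⟨s.sup id, IsCompactElement.finsetSup s fun c hc => (hsA hc).1, le_antisymm ?_ ?_⟩
  · exact e.hull_le (Finset.sup_le fun c hc => (hsA hc).2)
  · refine hat.trans (Finset.sup_le fun _ hm => ?_)
    obtain ⟨c, hc, rfl⟩ := Finset.mem_image.mp hm
    exact e.hull_mono (Finset.le_sup (f := id) hc)

theorem card_isCompactElement_le_of_orderEmbedding {M K : Type u} [CompleteLattice M]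
    [CompleteLattice K] (halgK : ∀ x : K, sSup {c : K | IsCompactElement c ∧ c ≤ x} = x)
    (e : M ↪o K) (he : ∀ S : Set M, S.Nonempty → e (sInf S) = sInf (e '' S)) :
    Cardinal.mk {a : M // IsCompactElement a} ≤ Cardinal.mk {x : K // IsCompactElement x} :=
  calc Cardinal.mk {a : M // IsCompactElement a}
      ≤ Cardinal.mk (e.hull '' {c : K | IsCompactElement c}) :=
        Cardinal.mk_le_mk_of_subset fun _ ha => exists_isCompactElement_hull_eq halgK e he ha
    _ ≤ Cardinal.mk {x : K // IsCompactElement x} := Cardinal.mk_image_le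

end CompleteLattice

theorem closedSublattice_card_compact_le_general {K : Type u} [CompleteLattice K]
    (halgK : ∀ x : K, sSup {c : K | CompleteLattice.IsCompactElement c ∧ c ≤ x} = x)
    (L : Set K)
    (hInf : ∀ S : Set K, S ⊆ L → S.Nonempty → sInf S ∈ L)
    (inst : CompleteLattice ↥L)
    (hord : ∀ a b : ↥L, inst.le a b ↔ (a : K) ≤ (b : K)) :
    Cardinal.mk {a : ↥L // @CompleteLattice.IsCompactElement ↥L inst a} ≤
      Cardinal.mk {x : K // CompleteLattice.IsCompactElement x} := by
  -- `↥L` also carries the subtype order as an instance, so `inst` has to be passed explicitly.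
  let e : @OrderEmbedding L K inst.toLE _ :=
    @OrderEmbedding.ofMapLEIff L K inst.toPartialOrder _ Subtype.val fun a b => (hord a b).symm
  refine @CompleteLattice.card_isCompactElement_le_of_orderEmbedding L K inst _ halgK e
    fun S hS => e.map_sInf_of_mem_range ?_
  exact ⟨⟨_, hInf _ (Set.image_subset_iff.mpr fun x _ => x.2) (hS.image e)⟩, rfl⟩

/-- if `L` is a nonempty subset of a complete algebraic lattice `K` closed under
nonempty suprema and infima computed in `K`, regarded as a complete lattice with the induced
order, then `L` has at most as many compact elements as `K`. -/
theorem closedSublattice_card_compact_le {K : Type u} [CompleteLattice K]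
    (halgK : ∀ x : K, sSup {c : K | CompleteLattice.IsCompactElement c ∧ c ≤ x} = x)
    (L : Set K) (hne : L.Nonempty)
    (hSup : ∀ S : Set K, S ⊆ L → S.Nonempty → sSup S ∈ L)
    (hInf : ∀ S : Set K, S ⊆ L → S.Nonempty → sInf S ∈ L)
    (inst : CompleteLattice ↥L)
    (hord : ∀ a b : ↥L, inst.le a b ↔ (a : K) ≤ (b : K)) :
    Cardinal.mk {a : ↥L // @CompleteLattice.IsCompactElement ↥L inst a} ≤
      Cardinal.mk {x : K // CompleteLattice.IsCompactElement x} :=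
  closedSublattice_card_compact_le_general halgK L hInf inst hord
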